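/- arXiv:0806.0508 — 8 statements merged into one kernel-verified Lean document; each statement's English description precedes it below -/
import Mathlib

section
/- Let f : ℕ → ℂ be an arithmetical function with f(1) ≠ 0, and let h denote the Dirichlet inverse of the function n ↦ f(n)/ξ(n). Then the function g(n) = ξ(n)·h(n) is the binomial inverse of f, i.e., (f ∘ g)(n) = δ(n) for all positive integers n. -/
/-!
Multiplication by `ξ` turns Dirichlet convolution into binomial convolution: prime by prime,
`C(ν_p(n), ν_p(d)) · ν_p(d)! · ν_p(n/d)! = ν_p(n)!`, so `C(n, d) ξ(d) ξ(n/d) = ξ(n)`.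
Hence `f ∘ (ξ h) = (ξ · f/ξ) ∘ (ξ h) = ξ · (f/ξ * h) = ξ δ = δ`.
-/

/-- `ξ(n) = ∏_p ν_p(n)!`. -/
def xi (n : ℕ) : ℕ := ∏ p ∈ n.primeFactors, Nat.factorial (n.factorization p)

/-- `∏_p C(ν_p(n), ν_p(d))`. -/
def binomCoeff (n d : ℕ) : ℕ :=
  ∏ p ∈ n.primeFactors, Nat.choose (n.factorization p) (d.factorization p)

/-- The binomial convolution. -/
noncomputable def bconv (f g : ℕ → ℂ) (n : ℕ) : ℂ :=
  ∑ d ∈ n.divisors, (binomCoeff n d : ℂ) * f d * g (n / d)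

/-- The Dirichlet convolution. -/
noncomputable def dconv (f g : ℕ → ℂ) (n : ℕ) : ℂ :=
  ∑ d ∈ n.divisors, f d * g (n / d)

/-- `δ(1) = 1`, `δ(n) = 0` for `n > 1`. -/
def delta (n : ℕ) : ℂ := if n = 1 then 1 else 0

open Nat

lemma xi_eq_prod_of_subset {n : ℕ} {s : Finset ℕ} (hs : n.primeFactors ⊆ s) :
    xi n = ∏ p ∈ s, (n.factorization p)! := by
  refine Finset.prod_subset hs fun p _ hp => ?_
  rw [Finsupp.notMem_support_iff.mp (support_factorization n ▸ hp), factorial_zero]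

lemma xi_ne_zero (n : ℕ) : xi n ≠ 0 :=
  Finset.prod_ne_zero_iff.mpr fun _ _ => factorial_ne_zero _

lemma xi_one : xi 1 = 1 := by simp [xi]

lemma binomCoeff_mul_xi_mul_xi_div {n d : ℕ} (hn : n ≠ 0) (hd : d ∣ n) :
    binomCoeff n d * (xi d * xi (n / d)) = xi n := by
  have hd0 : d ≠ 0 := ne_zero_of_dvd_ne_zero hn hd
  rw [xi_eq_prod_of_subset (primeFactors_mono hd hn),
    xi_eq_prod_of_subset (primeFactors_mono (div_dvd_of_dvd hd) hn),
    binomCoeff, ← Finset.prod_mul_distrib, ← Finset.prod_mul_distrib, xi]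
  refine Finset.prod_congr rfl fun p _ => ?_
  have hle : d.factorization p ≤ n.factorization p :=
    (factorization_le_iff_dvd hd0 hn).mpr hd p
  rw [factorization_div hd, Finsupp.tsub_apply, ← mul_assoc]
  exact choose_mul_factorial_mul_factorial hle

lemma bconv_xi_mul_xi_mul (a b : ℕ → ℂ) {n : ℕ} (hn : n ≠ 0) :
    bconv (fun m => xi m * a m) (fun m => xi m * b m) n = xi n * dconv a b n := by
  rw [bconv, dconv, Finset.mul_sum]
  refine Finset.sum_congr rfl fun d hd => ?_
  rw [← binomCoeff_mul_xi_mul_xi_div hn (dvd_of_mem_divisors hd)]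
  push_cast
  ring

theorem bconv_inverse_eq_xi_mul_dirichlet_inverse_general (f h : ℕ → ℂ)
    (hinv : ∀ n : ℕ, 0 < n → dconv (fun m => f m / (xi m : ℂ)) h n = delta n) :
    ∀ n : ℕ, 0 < n → bconv f (fun m => (xi m : ℂ) * h m) n = delta n := by
  intro n hn
  have hf_eq : f = fun m => (xi m : ℂ) * (f m / xi m) := funext fun m => by
    rw [mul_div_cancel₀ _ (Nat.cast_ne_zero.mpr (xi_ne_zero m))]
  rw [hf_eq, bconv_xi_mul_xi_mul _ _ hn.ne', hinv n hn, delta]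
  split_ifs with h1 <;> simp [h1, xi_one]

/-- If `f(1) ≠ 0` and `h` is the Dirichlet inverse of `n ↦ f(n)/ξ(n)`, then
`g = ξ·h` is the binomial inverse of `f`, i.e. `(f ∘ g)(n) = δ(n)` for all `n ≥ 1`. -/
theorem bconv_inverse_eq_xi_mul_dirichlet_inverse (f h : ℕ → ℂ) (hf : f 1 ≠ 0)
    (hinv : ∀ n : ℕ, 0 < n → dconv (fun m => f m / (xi m : ℂ)) h n = delta n) :
    ∀ n : ℕ, 0 < n → bconv f (fun m => (xi m : ℂ) * h m) n = delta n :=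
  bconv_inverse_eq_xi_mul_dirichlet_inverse_general f h hinv
end

section
/- If f, g : ℕ → ℂ are completely multiplicative, then for every positive integer n, (f ∘ g)(n) = ∏_p (f(p) + g(p))^{ν_p(n)}; in particular, the binomial convolution f ∘ g is again completely multiplicative. -/
/-- Completely multiplicative arithmetical function. -/
def IsCompletelyMult (f : ℕ → ℂ) : Prop :=
  f 1 = 1 ∧ ∀ m n : ℕ, 0 < m → 0 < n → f (m * n) = f m * f n

open Finset

lemma cm_pow {f : ℕ → ℂ} (hf : IsCompletelyMult f) {p : ℕ} (hp : 0 < p) (k : ℕ) :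
    f (p ^ k) = f p ^ k := by
  induction k with
  | zero => simpa using hf.1
  | succ k ih => rw [pow_succ, pow_succ, hf.2 _ _ (pow_pos hp k) hp, ih]

lemma binomCoeff_prime_pow {p : ℕ} (hp : p.Prime) {k i : ℕ} (hik : i ≤ k) :
    binomCoeff (p ^ k) (p ^ i) = k.choose i := by
  rcases Nat.eq_zero_or_pos k with rfl | hk
  · interval_cases i
    simp [binomCoeff]
  · have h1 : (p ^ k).primeFactors = {p} := by
      rw [Nat.primeFactors_pow _ hk.ne', Nat.Prime.primeFactors hp]
    rw [binomCoeff, h1, Finset.prod_singleton, hp.factorization_pow, hp.factorization_pow,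
      Finsupp.single_eq_same, Finsupp.single_eq_same]

lemma bconv_one (f g : ℕ → ℂ) (hf : IsCompletelyMult f) (hg : IsCompletelyMult g) :
    bconv f g 1 = 1 := by
  simp [bconv, binomCoeff, hf.1, hg.1]

lemma bconv_prime_pow (f g : ℕ → ℂ) (hf : IsCompletelyMult f) (hg : IsCompletelyMult g)
    {p : ℕ} (hp : p.Prime) (k : ℕ) :
    bconv f g (p ^ k) = (f p + g p) ^ k := by
  rw [bconv, Nat.divisors_prime_pow hp, Finset.sum_map, add_pow]
  refine Finset.sum_congr rfl fun i hi => ?_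
  have hik : i ≤ k := Nat.lt_succ_iff.mp (Finset.mem_range.mp hi)
  simp only [Function.Embedding.coeFn_mk]
  rw [binomCoeff_prime_pow hp hik, Nat.pow_div hik hp.pos, cm_pow hf hp.pos, cm_pow hg hp.pos]
  ring

lemma binomCoeff_mul {m n d e : ℕ} (hmn : m.Coprime n) (hm : m ≠ 0) (hn : n ≠ 0)
    (hd : d ∣ m) (he : e ∣ n) :
    binomCoeff (m * n) (d * e) = binomCoeff m d * binomCoeff n e := by
  have hd0 : d ≠ 0 := fun h => hm (by simpa [h] using hd)
  have he0 : e ≠ 0 := fun h => hn (by simpa [h] using he)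
  have hfac : ∀ p : ℕ, (m * n).factorization p = m.factorization p + n.factorization p := by
    intro p; rw [Nat.factorization_mul hm hn]; rfl
  have hfac' : ∀ p : ℕ, (d * e).factorization p = d.factorization p + e.factorization p := by
    intro p; rw [Nat.factorization_mul hd0 he0]; rfl
  rw [binomCoeff, hmn.primeFactors_mul, Finset.prod_union hmn.disjoint_primeFactors]
  congr 1
  · refine Finset.prod_congr rfl fun p hp => ?_
    have hpn : n.factorization p = 0 := by
      have h := Finset.disjoint_left.mp hmn.disjoint_primeFactors hp
      rw [← Nat.support_factorization] at h
      exact Finsupp.notMem_support_iff.mp h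
    have hpe : e.factorization p = 0 := by
      have := (Nat.factorization_le_iff_dvd he0 hn).mpr he
      exact Nat.le_zero.mp (hpn ▸ this p)
    rw [hfac, hfac', hpn, hpe, add_zero, add_zero]
  · refine Finset.prod_congr rfl fun p hp => ?_
    have hpm : m.factorization p = 0 := by
      have h := Finset.disjoint_right.mp hmn.disjoint_primeFactors hp
      rw [← Nat.support_factorization] at h
      exact Finsupp.notMem_support_iff.mp h
    have hpd : d.factorization p = 0 := by
      have := (Nat.factorization_le_iff_dvd hd0 hm).mpr hd
      exact Nat.le_zero.mp (hpm ▸ this p)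
    rw [hfac, hfac', hpm, hpd, zero_add, zero_add]

lemma bconv_mul_coprime (f g : ℕ → ℂ) (hf : IsCompletelyMult f) (hg : IsCompletelyMult g)
    {m n : ℕ} (hmn : m.Coprime n) (hm : 0 < m) (hn : 0 < n) :
    bconv f g (m * n) = bconv f g m * bconv f g n := by
  rw [bconv, bconv, bconv, Finset.sum_mul_sum, ← Finset.sum_product']
  refine (Finset.sum_bij' (fun d _ => (Nat.gcd d m, Nat.gcd d n))
    (fun pr _ => pr.1 * pr.2) ?_ ?_ ?_ ?_ ?_).symm.symm
  · intro d hd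
    obtain ⟨hdvd, -⟩ := Nat.mem_divisors.mp hd
    simp only [Finset.mem_product, Nat.mem_divisors]
    exact ⟨⟨Nat.gcd_dvd_right d m, hm.ne'⟩, ⟨Nat.gcd_dvd_right d n, hn.ne'⟩⟩
  · intro pr hpr
    simp only [Finset.mem_product, Nat.mem_divisors] at hpr
    exact Nat.mem_divisors.mpr ⟨mul_dvd_mul hpr.1.1 hpr.2.1, mul_ne_zero hm.ne' hn.ne'⟩
  · intro d hd
    obtain ⟨hdvd, -⟩ := Nat.mem_divisors.mp hd
    exact (Nat.gcd_mul_gcd_eq_iff_dvd_mul_of_coprime hmn).mpr hdvd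
  · intro pr hpr
    simp only [Finset.mem_product, Nat.mem_divisors] at hpr
    obtain ⟨⟨h1, -⟩, ⟨h2, -⟩⟩ := hpr
    have c2m : Nat.Coprime pr.2 m := (Nat.Coprime.coprime_dvd_left h2 hmn.symm)
    have c1n : Nat.Coprime pr.1 n := (Nat.Coprime.coprime_dvd_left h1 hmn)
    have e1 : Nat.gcd (pr.1 * pr.2) m = pr.1 := by
      rw [Nat.Coprime.gcd_mul_right_cancel pr.1 c2m, Nat.gcd_eq_left h1]
    have e2 : Nat.gcd (pr.1 * pr.2) n = pr.2 := by
      rw [Nat.Coprime.gcd_mul_left_cancel pr.2 c1n, Nat.gcd_eq_left h2]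
    exact Prod.ext e1 e2
  · intro d hd
    obtain ⟨hdvd, -⟩ := Nat.mem_divisors.mp hd
    obtain ⟨d1, d2, h1, h2, rfl⟩ : ∃ d1 d2, d1 ∣ m ∧ d2 ∣ n ∧ d = d1 * d2 :=
      ⟨d.gcd m, d.gcd n, Nat.gcd_dvd_right d m, Nat.gcd_dvd_right d n,
        ((Nat.gcd_mul_gcd_eq_iff_dvd_mul_of_coprime hmn).mpr hdvd).symm⟩
    have hd10 : 0 < d1 := Nat.pos_of_dvd_of_pos h1 hm
    have hd20 : 0 < d2 := Nat.pos_of_dvd_of_pos h2 hn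
    have c2m : Nat.Coprime d2 m := Nat.Coprime.coprime_dvd_left h2 hmn.symm
    have c1n : Nat.Coprime d1 n := Nat.Coprime.coprime_dvd_left h1 hmn
    have e1 : Nat.gcd (d1 * d2) m = d1 := by
      rw [Nat.Coprime.gcd_mul_right_cancel d1 c2m, Nat.gcd_eq_left h1]
    have e2 : Nat.gcd (d1 * d2) n = d2 := by
      rw [Nat.Coprime.gcd_mul_left_cancel d2 c1n, Nat.gcd_eq_left h2]
    have hdivq : (m * n) / (d1 * d2) = (m / d1) * (n / d2) :=
      (Nat.div_mul_div_comm h1 h2).symm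
    have hq1 : 0 < m / d1 := Nat.div_pos (Nat.le_of_dvd hm h1) hd10
    have hq2 : 0 < n / d2 := Nat.div_pos (Nat.le_of_dvd hn h2) hd20
    simp only
    rw [e1, e2, binomCoeff_mul hmn hm.ne' hn.ne' h1 h2, hf.2 _ _ hd10 hd20, hdivq,
      hg.2 _ _ hq1 hq2]
    push_cast
    ring

/-- If `f` and `g` are completely multiplicative, then
`(f ∘ g)(n) = ∏_p (f(p) + g(p))^{ν_p(n)}`; in particular `f ∘ g` is again
completely multiplicative. -/
theorem bconv_of_completely_multiplicative (f g : ℕ → ℂ)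
    (hf : IsCompletelyMult f) (hg : IsCompletelyMult g) :
    (∀ n : ℕ, 0 < n →
        bconv f g n = ∏ p ∈ n.primeFactors, (f p + g p) ^ n.factorization p) ∧
      IsCompletelyMult (bconv f g) := by
  have hmult : ∀ x y : ℕ, Nat.Coprime x y → bconv f g (x * y) = bconv f g x * bconv f g y := by
    intro x y hxy
    rcases Nat.eq_zero_or_pos x with rfl | hx
    · have : y = 1 := by simpa [Nat.Coprime] using hxy
      subst this
      simp [bconv_one f g hf hg]
    rcases Nat.eq_zero_or_pos y with rfl | hy
    · have : x = 1 := by simpa [Nat.Coprime] using hxy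
      subst this
      simp [bconv_one f g hf hg]
    exact bconv_mul_coprime f g hf hg hxy hx hy
  have key : ∀ n : ℕ, 0 < n →
      bconv f g n = ∏ p ∈ n.primeFactors, (f p + g p) ^ n.factorization p := by
    intro n hn
    rw [Nat.multiplicative_factorization (bconv f g) hmult (bconv_one f g hf hg) hn.ne',
      Finsupp.prod]
    rw [Nat.support_factorization]
    exact Finset.prod_congr rfl fun p hp =>
      bconv_prime_pow f g hf hg (Nat.prime_of_mem_primeFactors hp) _
  refine ⟨key, bconv_one f g hf hg, fun m n hm hn => ?_⟩
  rw [key _ (mul_pos hm hn), key _ hm, key _ hn]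
  have hPF : (m * n).primeFactors = m.primeFactors ∪ n.primeFactors :=
    Nat.primeFactors_mul hm.ne' hn.ne'
  have hsplit : ∀ p ∈ (m * n).primeFactors,
      (f p + g p) ^ (m * n).factorization p
        = (f p + g p) ^ m.factorization p * (f p + g p) ^ n.factorization p := by
    intro p _
    rw [Nat.factorization_mul hm.ne' hn.ne', Finsupp.add_apply, pow_add]
  rw [Finset.prod_congr rfl hsplit, Finset.prod_mul_distrib]
  congr 1
  · refine (Finset.prod_subset (hPF ▸ Finset.subset_union_left) fun p _ hp => ?_).symm
    rw [← Nat.support_factorization] at hp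
    rw [Finsupp.notMem_support_iff.mp hp, pow_zero]
  · refine (Finset.prod_subset (hPF ▸ Finset.subset_union_right) fun p _ hp => ?_).symm
    rw [← Nat.support_factorization] at hp
    rw [Finsupp.notMem_support_iff.mp hp, pow_zero]
end

section
/- If f : ℕ → ℂ is completely multiplicative, then the function n ↦ (-1)^{Ω(n)} f(n) is the binomial inverse of f, i.e., ∑_{d ∣ n} (∏_p C(ν_p(n), ν_p(d))) f(d) · (-1)^{Ω(n/d)} f(n/d) = δ(n) for every positive integer n. -/
/-- `Ω(n) = ∑_p ν_p(n)`. -/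
def bigOmega (n : ℕ) : ℕ := ∑ p ∈ n.primeFactors, n.factorization p

open Finset

lemma bigOmega_eq_sum {m : ℕ} {s : Finset ℕ} (h : m.primeFactors ⊆ s) :
    bigOmega m = ∑ p ∈ s, m.factorization p := by
  rw [bigOmega]
  refine Finset.sum_subset h fun p _ hp => ?_
  rw [← Nat.support_factorization] at hp
  exact Finsupp.notMem_support_iff.mp hp

lemma bigOmega_mul {a b : ℕ} (ha : a ≠ 0) (hb : b ≠ 0) :
    bigOmega (a * b) = bigOmega a + bigOmega b := by
  have hsub : (a * b).primeFactors ⊆ a.primeFactors ∪ b.primeFactors :=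
    (Nat.primeFactors_mul ha hb).le
  rw [bigOmega_eq_sum (s := a.primeFactors ∪ b.primeFactors) hsub,
    bigOmega_eq_sum (s := a.primeFactors ∪ b.primeFactors) subset_union_left,
    bigOmega_eq_sum (s := a.primeFactors ∪ b.primeFactors) subset_union_right,
    ← Finset.sum_add_distrib]
  refine Finset.sum_congr rfl fun p _ => ?_
  rw [Nat.factorization_mul ha hb]; rfl

lemma n_eq_prod (n : ℕ) (hn : n ≠ 0) :
    n = ∏ p ∈ n.primeFactors, p ^ n.factorization p := by
  conv_lhs => rw [← Nat.factorization_prod_pow_eq_self hn]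
  rw [Finsupp.prod, Nat.support_factorization]

lemma divisor_eq_prod {n d : ℕ} (hn : n ≠ 0) (hd : d ∣ n) :
    d = ∏ p ∈ n.primeFactors, p ^ d.factorization p := by
  have hd0 : d ≠ 0 := fun h => hn (by simpa [h] using hd)
  conv_lhs => rw [n_eq_prod d hd0]
  refine Finset.prod_subset (Nat.primeFactors_mono hd hn) fun p _ hp => ?_
  rw [← Nat.support_factorization] at hp
  rw [Finsupp.notMem_support_iff.mp hp, pow_zero]

lemma fact_prod_pow (n : ℕ) (g : ∀ p ∈ n.primeFactors, ℕ) (q : ℕ)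
    (hq : q ∈ n.primeFactors) :
    (∏ p ∈ n.primeFactors.attach, (p : ℕ) ^ g p.1 p.2).factorization q = g q hq := by
  rw [Nat.factorization_prod fun p _ =>
    pow_ne_zero _ (Nat.prime_of_mem_primeFactors p.2).ne_zero]
  rw [Finsupp.finset_sum_apply]
  have : ∀ p : {x // x ∈ n.primeFactors},
      ((p : ℕ) ^ g p.1 p.2).factorization q
        = if p = (⟨q, hq⟩ : {x // x ∈ n.primeFactors}) then g q hq else 0 := by
    intro p
    rw [(Nat.prime_of_mem_primeFactors p.2).factorization_pow, Finsupp.single_apply]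
    by_cases h : p = (⟨q, hq⟩ : {x // x ∈ n.primeFactors})
    · subst h; simp
    · rw [if_neg h, if_neg]
      exact fun hpq => h (Subtype.ext hpq)
  rw [Finset.sum_congr rfl fun p _ => this p, Finset.sum_ite_eq' _ _ _]
  simp

lemma key_sum (n : ℕ) (hn : n ≠ 0) (hn1 : n ≠ 1) :
    ∑ d ∈ n.divisors, (binomCoeff n d : ℂ) * (-1 : ℂ) ^ bigOmega d = 0 := by
  have hstep : ∑ d ∈ n.divisors, (binomCoeff n d : ℂ) * (-1 : ℂ) ^ bigOmega d
      = ∏ p ∈ n.primeFactors, ∑ k ∈ Finset.range (n.factorization p + 1),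
          ((n.factorization p).choose k : ℂ) * (-1 : ℂ) ^ k := by
    rw [Finset.prod_sum]
    refine Finset.sum_nbij' (fun d => fun p _ => d.factorization p)
      (fun g => ∏ p ∈ n.primeFactors.attach, (p : ℕ) ^ g p.1 p.2)
      ?_ ?_ ?_ ?_ ?_
    · intro d hd
      rw [Finset.mem_pi]
      intro p hp
      rw [Finset.mem_range, Nat.lt_succ_iff]
      exact (Nat.factorization_le_iff_dvd (Nat.pos_of_mem_divisors hd).ne' hn).2
        (Nat.dvd_of_mem_divisors hd) p
    · intro g hg
      rw [Nat.mem_divisors]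
      refine ⟨?_, hn⟩
      have : (∏ p ∈ n.primeFactors.attach, (p : ℕ) ^ g p.1 p.2)
          ∣ ∏ p ∈ n.primeFactors.attach, (p : ℕ) ^ n.factorization p := by
        refine Finset.prod_dvd_prod_of_dvd _ _ fun p _ => pow_dvd_pow _ ?_
        have := Finset.mem_pi.mp hg p.1 p.2
        rw [Finset.mem_range, Nat.lt_succ_iff] at this
        exact this
      rwa [Finset.prod_attach _ (fun p => p ^ n.factorization p),
        ← n_eq_prod n hn] at this
    · intro d hd
      show ∏ p ∈ n.primeFactors.attach, (p : ℕ) ^ d.factorization p.1 = d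
      rw [Finset.prod_attach _ (fun p => p ^ d.factorization p)]
      exact (divisor_eq_prod hn (Nat.dvd_of_mem_divisors hd)).symm
    · intro g hg
      funext p hp
      exact fact_prod_pow n g p hp
    · intro d hd
      have hdvd := Nat.dvd_of_mem_divisors hd
      show (binomCoeff n d : ℂ) * (-1 : ℂ) ^ bigOmega d
        = ∏ p ∈ n.primeFactors.attach,
            ((n.factorization p.1).choose (d.factorization p.1) : ℂ)
              * (-1 : ℂ) ^ d.factorization p.1
      have h1 : (binomCoeff n d : ℂ)
          = ∏ p ∈ n.primeFactors.attach,
              ((n.factorization p.1).choose (d.factorization p.1) : ℂ) := by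
        rw [binomCoeff, Nat.cast_prod,
          Finset.prod_attach _ (fun p => ((n.factorization p).choose
            (d.factorization p) : ℂ))]
      have h2 : ((-1 : ℂ)) ^ bigOmega d
          = ∏ p ∈ n.primeFactors.attach, (-1 : ℂ) ^ d.factorization p.1 := by
        rw [bigOmega_eq_sum (Nat.primeFactors_mono hdvd hn), ← Finset.prod_pow_eq_pow_sum,
          ← Finset.prod_attach _ (fun p => (-1 : ℂ) ^ d.factorization p)]
      rw [h1, h2, ← Finset.prod_mul_distrib]
  rw [hstep]
  obtain ⟨p, hp⟩ := (n.primeFactors.nonempty_iff_ne_empty).2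
    (fun h => by simp [Nat.primeFactors_eq_empty, hn, hn1] at h)
  refine Finset.prod_eq_zero hp ?_
  have he : n.factorization p ≠ 0 := by
    rw [← Nat.support_factorization] at hp
    exact Finsupp.mem_support_iff.mp hp
  have := Int.alternating_sum_range_choose (n := n.factorization p)
  rw [if_neg he] at this
  have := congrArg (fun z : ℤ => (z : ℂ)) this
  push_cast at this
  rw [← this]
  exact Finset.sum_congr rfl fun k _ => by ring

/-- If `f` is completely multiplicative, then `n ↦ (-1)^{Ω(n)} f(n)` is the binomial
inverse of `f`:
`∑_{d ∣ n} (∏_p C(ν_p(n), ν_p(d))) f(d) (-1)^{Ω(n/d)} f(n/d) = δ(n)` for all `n ≥ 1`. -/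
theorem binomial_inverse_of_completely_multiplicative (f : ℕ → ℂ)
    (hf : IsCompletelyMult f) :
    ∀ n : ℕ, 0 < n →
      ∑ d ∈ n.divisors,
        (binomCoeff n d : ℂ) * f d * ((-1 : ℂ) ^ bigOmega (n / d) * f (n / d))
        = delta n := by
  intro n hn
  by_cases hn1 : n = 1
  · subst hn1
    simp [delta, binomCoeff, bigOmega, hf.1]
  · have hne : n ≠ 0 := hn.ne'
    have hterm : ∀ d ∈ n.divisors,
        (binomCoeff n d : ℂ) * f d * ((-1 : ℂ) ^ bigOmega (n / d) * f (n / d))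
          = ((-1 : ℂ) ^ bigOmega n * f n)
            * ((binomCoeff n d : ℂ) * (-1 : ℂ) ^ bigOmega d) := by
      intro d hd
      have hdvd := Nat.dvd_of_mem_divisors hd
      have hd0 : 0 < d := Nat.pos_of_mem_divisors hd
      have hq0 : 0 < n / d := Nat.div_pos (Nat.le_of_dvd hn hdvd) hd0
      have hmul : d * (n / d) = n := Nat.mul_div_cancel' hdvd
      have hfmul : f d * f (n / d) = f n := by
        rw [← hf.2 d (n / d) hd0 hq0, hmul]
      have hOmega : bigOmega d + bigOmega (n / d) = bigOmega n := by
        rw [← bigOmega_mul hd0.ne' hq0.ne', hmul]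
      have hsign : (-1 : ℂ) ^ bigOmega (n / d)
          = (-1 : ℂ) ^ bigOmega n * (-1 : ℂ) ^ bigOmega d := by
        rw [← hOmega, pow_add]
        have : ((-1 : ℂ) ^ bigOmega d) * ((-1 : ℂ) ^ bigOmega d) = 1 := by
          rw [← pow_add, ← two_mul, pow_mul]; norm_num
        rw [mul_comm ((-1:ℂ) ^ bigOmega d), mul_assoc, this, mul_one]
      rw [hsign, ← hfmul]; ring
    rw [Finset.sum_congr rfl hterm, ← Finset.mul_sum, key_sum n hne hn1, mul_zero,
      delta, if_neg hn1]
end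

section
/- Let f : ℕ → ℂ be multiplicative and let k ≥ 2 be an integer. Let f^{k∘} denote the k-fold binomial convolution of f with itself, i.e., f^{k∘}(n) = ξ(n) · ((f/ξ) * ⋯ * (f/ξ))(n) (k-fold Dirichlet power of f/ξ). If f^{k∘}(n) = k^{Ω(n)} · f(n) for all positive integers n, then f is completely multiplicative. -/
/-- `k`-fold Dirichlet power of `f` (`0`-th power is the identity `δ`). -/
noncomputable def dpow (f : ℕ → ℂ) : ℕ → ℕ → ℂ
  | 0 => delta
  | k + 1 => dconv f (dpow f k)

/-- Multiplicative arithmetical function. -/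
def IsMult (f : ℕ → ℂ) : Prop :=
  f 1 = 1 ∧ ∀ m n : ℕ, 0 < m → 0 < n → Nat.Coprime m n → f (m * n) = f m * f n

/-!
At a prime `p`, the values `f (p ^ j) / j!` are the coefficients of a power series `F`, and the
hypothesis at `p ^ a` reads `a! · [X^a] F^k = k^a f(p^a)`. By strong induction on `a`, `F` agrees
with `exp (f(p) X)` below degree `a`; to first order in the difference,
`[X^a] F^k = k^a f(p)^a / a! + k ([X^a] F - f(p)^a / a!)`, so `(k^a - k)(f(p^a) - f(p)^a) = 0`,
and `k^a ≠ k` once `a ≥ 2`. Multiplicativity then propagates `f(p^a) = f(p)^a` to all arguments.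
-/

open PowerSeries
open scoped Nat

lemma xi_prime_pow {p : ℕ} (hp : p.Prime) (a : ℕ) : xi (p ^ a) = a ! := by
  rcases a.eq_zero_or_pos with rfl | ha
  · simp [xi]
  · simp [xi, Nat.primeFactors_prime_pow ha.ne' hp, hp.factorization_pow]

lemma bigOmega_prime_pow {p : ℕ} (hp : p.Prime) (a : ℕ) : bigOmega (p ^ a) = a := by
  rcases a.eq_zero_or_pos with rfl | ha
  · simp [bigOmega]
  · simp [bigOmega, Nat.primeFactors_prime_pow ha.ne' hp, hp.factorization_pow]

theorem IsMult.isCompletelyMult_of_prime_pow {f : ℕ → ℂ} (hf : IsMult f)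
    (h : ∀ p, p.Prime → ∀ a, f (p ^ a) = f p ^ a) : IsCompletelyMult f := by
  have hcop : ∀ m n, Nat.Coprime m n → f (m * n) = f m * f n := by
    intro m n hmn
    rcases m.eq_zero_or_pos with rfl | hm
    · simp_all [hf.1]
    rcases n.eq_zero_or_pos with rfl | hn
    · simp_all [hf.1]
    exact hf.2 m n hm hn hmn
  have hfac : ∀ {n}, n ≠ 0 → f n = n.factorization.prod fun p e => f p ^ e := fun hn =>
    (Nat.multiplicative_factorization f hcop hf.1 hn).trans <|
      Finsupp.prod_congr fun p hp => h p (Nat.prime_of_mem_primeFactors hp) _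
  refine ⟨hf.1, fun m n hm hn => ?_⟩
  rw [hfac (by positivity), hfac hm.ne', hfac hn.ne', Nat.factorization_mul hm.ne' hn.ne',
    Finsupp.prod_add_index (fun p _ => pow_zero (f p)) fun p _ => pow_add (f p)]

section PowerSeries

variable {R : Type*} [CommRing R]

lemma coeff_mul_of_X_pow_dvd {D : R⟦X⟧} {a : ℕ} (hD : X ^ a ∣ D) (G : R⟦X⟧) :
    coeff a (G * D) = constantCoeff G * coeff a D := by
  obtain ⟨D, rfl⟩ := hD
  simp only [mul_left_comm G, coeff_X_pow_mul', le_refl, if_true, Nat.sub_self,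
    coeff_zero_eq_constantCoeff, map_mul]

/-- `(E + D)^K ≡ E^K + K E^(K-1) D` modulo `D^2`, and `D^2` vanishes to order `2a > a`. -/
lemma coeff_pow_of_X_pow_dvd_sub {E F : R⟦X⟧} {a : ℕ} (ha : 0 < a) (hE : constantCoeff E = 1)
    (hFE : X ^ a ∣ F - E) (K : ℕ) :
    coeff a (F ^ K) = coeff a (E ^ K) + K * coeff a (F - E) := by
  have hsq : X ^ (a + 1) ∣ (E + (F - E)) ^ K - E ^ (K - 1) * (F - E) * (K : R⟦X⟧) - E ^ K :=
    calc X ^ (a + 1) ∣ (X ^ a) ^ 2 := by rw [← pow_mul]; exact pow_dvd_pow X (by omega)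
      _ ∣ (F - E) ^ 2 := pow_dvd_pow_of_dvd hFE 2
      _ ∣ _ := sq_dvd_add_pow_sub_sub (F - E) E K
  have := X_pow_dvd_iff.mp hsq a (lt_add_one a)
  rw [add_sub_cancel, mul_right_comm, map_sub, map_sub, coeff_mul_of_X_pow_dvd hFE] at this
  simp only [map_mul, map_pow, hE, one_pow, one_mul, map_natCast] at this
  linear_combination this

end PowerSeries

section Exponential

variable {K : Type*} [Field K] [CharZero K]

lemma coeff_rescale_exp (c : K) (n : ℕ) : coeff n (rescale c (exp K)) = c ^ n / n ! := by
  simp [coeff_exp, div_eq_mul_inv]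

lemma rescale_exp_pow (c : K) (k : ℕ) : rescale c (exp K) ^ k = rescale (k * c) (exp K) := by
  rw [← map_pow, exp_pow_eq_rescale_exp, rescale_rescale]

theorem eq_pow_of_coeff_egf_pow {u : ℕ → K} {k : ℕ} (hk : 2 ≤ k) (hu0 : u 0 = 1)
    (h : ∀ a, (a ! : K) * coeff a ((mk fun j => u j / j !) ^ k) = k ^ a * u a) (a : ℕ) :
    u a = u 1 ^ a := by
  induction a using Nat.strong_induction_on with | _ a ih => ?_
  rcases a with _ | _ | a
  · simpa using hu0
  · simp
  set E := rescale (u 1) (exp K)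
  have hE : constantCoeff E = 1 := by
    rw [← coeff_zero_eq_constantCoeff_apply, coeff_rescale_exp]; simp
  have hFE : X ^ (a + 2) ∣ (mk fun j => u j / j !) - E := X_pow_dvd_iff.mpr fun j hj => by
    rw [map_sub, coeff_mk, coeff_rescale_exp, ih j hj, sub_self]
  have hcoeff := coeff_pow_of_X_pow_dvd_sub (by omega) hE hFE k
  rw [rescale_exp_pow, map_sub, coeff_rescale_exp, coeff_rescale_exp, coeff_mk] at hcoeff
  have hlt : k ^ 1 < k ^ (a + 2) := Nat.pow_lt_pow_right (by omega) (by omega)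
  have hne : (k : K) ^ (a + 2) - k ≠ 0 :=
    sub_ne_zero.mpr (by exact_mod_cast (pow_one k ▸ hlt).ne')
  have hfact : ((a + 2)! : K) ≠ 0 := Nat.cast_ne_zero.mpr (Nat.factorial_ne_zero _)
  have key : ((k : K) ^ (a + 2) - k) * (u (a + 2) - u 1 ^ (a + 2)) = 0 := by
    have := h (a + 2)
    rw [hcoeff] at this
    field_simp at this
    linear_combination -this
  exact sub_eq_zero.mp ((mul_eq_zero.mp key).resolve_left hne)

end Exponential

/-- The local factor of `f` at `p`, with `X^j` standing for `p^j`. -/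
noncomputable def localSeries (f : ℕ → ℂ) (p : ℕ) : ℂ⟦X⟧ := mk fun j => f (p ^ j)

section LocalSeries

variable {p : ℕ}

lemma localSeries_dconv (hp : p.Prime) (f g : ℕ → ℂ) :
    localSeries (dconv f g) p = localSeries f p * localSeries g p := by
  ext a
  rw [coeff_mul, Finset.Nat.sum_antidiagonal_eq_sum_range_succ (fun i j => coeff i _ * coeff j _)]
  simp only [localSeries, coeff_mk, dconv, Nat.divisors_prime_pow hp, Finset.sum_map]
  refine Finset.sum_congr rfl fun j hj => ?_
  simp [Nat.pow_div (Nat.lt_succ_iff.mp (Finset.mem_range.mp hj)) hp.pos]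

lemma localSeries_delta (hp : p.Prime) : localSeries delta p = 1 := by
  ext j
  simp [localSeries, delta, coeff_one, hp.ne_one]

lemma localSeries_dpow (hp : p.Prime) (f : ℕ → ℂ) (k : ℕ) :
    localSeries (dpow f k) p = localSeries f p ^ k := by
  induction k with
  | zero => exact localSeries_delta hp
  | succ k ih => rw [dpow, localSeries_dconv hp, ih, pow_succ']

end LocalSeries

/-- If `f` is multiplicative, `k ≥ 2`, and the `k`-fold binomial power of `f`
(`f^{k∘} = ξ·((f/ξ) * ⋯ * (f/ξ))`, the `k`-fold Dirichlet power of `f/ξ` times `ξ`)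
satisfies `f^{k∘}(n) = k^{Ω(n)} f(n)` for all `n ≥ 1`, then `f` is completely
multiplicative. -/
theorem completely_multiplicative_of_binomial_power (f : ℕ → ℂ) (hf : IsMult f)
    (k : ℕ) (hk : 2 ≤ k)
    (hpow : ∀ n : ℕ, 0 < n →
      (xi n : ℂ) * dpow (fun m => f m / (xi m : ℂ)) k n = (k : ℂ) ^ bigOmega n * f n) :
    IsCompletelyMult f := by
  refine hf.isCompletelyMult_of_prime_pow fun p hp a => ?_
  have egf : localSeries (fun m => f m / xi m) p = mk fun j => f (p ^ j) / j ! := by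
    ext j
    simp [localSeries, xi_prime_pow hp]
  have hcoeff (a : ℕ) :
      (a ! : ℂ) * coeff a ((mk fun j => f (p ^ j) / j !) ^ k) = k ^ a * f (p ^ a) := by
    rw [← egf, ← localSeries_dpow hp, localSeries, coeff_mk]
    simpa only [xi_prime_pow hp, bigOmega_prime_pow hp] using hpow _ (pow_pos hp.pos a)
  simpa using eq_pow_of_coeff_egf_pow hk (by simpa using hf.1) hcoeff a
end

section
/- Let f : ℕ → ℂ be multiplicative. Then f is completely multiplicative if and only if f·(g ∘ h) = (f·g) ∘ (f·h) for all arithmetical functions g, h : ℕ → ℂ, where · denotes pointwise multiplication; that is, for all g, h and all positive integers n, f(n)·(g ∘ h)(n) = ((f·g) ∘ (f·h))(n). -/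
/-! Testing the distributive law against the point masses at `x` and `y` isolates the single
term `d = x` of `bconv` at `n = x * y`, giving `f (x * y) * B = B * f x * f y` with
`B = binomCoeff (x * y) x`. Since `ν_p(x) ≤ ν_p(x * y)` for every `p`, the binomial coefficient
`B` is positive, so it cancels. -/

lemma binomCoeff_pos {n d : ℕ} (hn : n ≠ 0) (hd : d ∣ n) : 0 < binomCoeff n d :=
  Finset.prod_pos fun p _ =>
    Nat.choose_pos ((Nat.factorization_le_iff_dvd (ne_zero_of_dvd_ne_zero hn hd) hn).2 hd p)

lemma bconv_single_single {x y : ℕ} (hx : 0 < x) (hy : 0 < y) (c e : ℂ) :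
    bconv (Pi.single x c) (Pi.single y e) (x * y) = binomCoeff (x * y) x * c * e := by
  rw [bconv, Finset.sum_eq_single x]
  · rw [Nat.mul_div_cancel_left y hx, Pi.single_eq_same, Pi.single_eq_same]
  · intro d _ hdx
    rw [Pi.single_eq_of_ne hdx, mul_zero, zero_mul]
  · intro hx_not_mem
    exact absurd (Nat.mem_divisors.2 ⟨dvd_mul_right x y, (Nat.mul_pos hx hy).ne'⟩) hx_not_mem

lemma IsCompletelyMult.mul_bconv {f : ℕ → ℂ} (hf : IsCompletelyMult f) (g h : ℕ → ℂ) {n : ℕ}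
    (hn : 0 < n) :
    f n * bconv g h n = bconv (fun m => f m * g m) (fun m => f m * h m) n := by
  rw [bconv, bconv, Finset.mul_sum]
  refine Finset.sum_congr rfl fun d hd => ?_
  obtain ⟨d_dvd, -⟩ := Nat.mem_divisors.1 hd
  have hd_pos : 0 < d := Nat.pos_of_dvd_of_pos d_dvd hn
  have hf_n : f n = f d * f (n / d) := by
    rw [← hf.2 d (n / d) hd_pos (Nat.div_pos (Nat.le_of_dvd hn d_dvd) hd_pos),
      Nat.mul_div_cancel' d_dvd]
  rw [hf_n]
  ring

lemma map_mul_of_mul_bconv {f : ℕ → ℂ}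
    (H : ∀ (g h : ℕ → ℂ) (n : ℕ), 0 < n →
      f n * bconv g h n = bconv (fun m => f m * g m) (fun m => f m * h m) n)
    {x y : ℕ} (hx : 0 < x) (hy : 0 < y) : f (x * y) = f x * f y := by
  have key := H (Pi.single x 1) (Pi.single y 1) (x * y) (Nat.mul_pos hx hy)
  have mul_single (z : ℕ) : (fun m => f m * (Pi.single z 1 : ℕ → ℂ) m) = Pi.single z (f z) :=
    funext fun m => by simpa using (Pi.single_mul_right_apply z m f (1 : ℂ)).symm
  rw [mul_single, mul_single, bconv_single_single hx hy, bconv_single_single hx hy] at key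
  have hB : (binomCoeff (x * y) x : ℂ) ≠ 0 :=
    Nat.cast_ne_zero.2 (binomCoeff_pos (Nat.mul_pos hx hy).ne' (dvd_mul_right x y)).ne'
  exact mul_left_cancel₀ hB (by linear_combination key)

/-- A multiplicative `f` is completely multiplicative if and only if `f`
distributes over the binomial convolution: `f·(g ∘ h) = (f·g) ∘ (f·h)` for all
arithmetical functions `g, h`. -/
theorem completely_multiplicative_iff_distributes_over_bconv (f : ℕ → ℂ)
    (hf : IsMult f) :
    IsCompletelyMult f ↔
      ∀ (g h : ℕ → ℂ) (n : ℕ), 0 < n →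
        f n * bconv g h n = bconv (fun m => f m * g m) (fun m => f m * h m) n :=
  ⟨fun hc g h _ hn => hc.mul_bconv g h hn,
    fun H => ⟨hf.1, fun _ _ hm hn => map_mul_of_mul_bconv H hm hn⟩⟩
end

section
/- If F, G : ℕ → ℂ are semimultiplicative and neither is identically zero, then their binomial convolution F ∘ G is semimultiplicative, i.e., (F ∘ G)(m)·(F ∘ G)(n) = (F ∘ G)(gcd(m,n))·(F ∘ G)(lcm(m,n)) for all positive integers m, n. -/
/-- Semimultiplicative arithmetical function:
`F(m)F(n) = F(gcd(m,n))·F(lcm(m,n))` for all positive integers `m, n`. -/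
def IsSemiMult (F : ℕ → ℂ) : Prop :=
  ∀ m n : ℕ, 0 < m → 0 < n → F m * F n = F (Nat.gcd m n) * F (Nat.lcm m n)

open Finset ArithmeticFunction
open scoped Nat

namespace IsSemiMult

variable {F G : ℕ → ℂ}

theorem mul (hF : IsSemiMult F) (hG : IsSemiMult G) : IsSemiMult fun n => F n * G n := by
  intro m n hm hn
  linear_combination (F m * F n) * hG m n hm hn + (G (m.gcd n) * G (m.lcm n)) * hF m n hm hn

theorem div (hF : IsSemiMult F) (hG : IsSemiMult G) : IsSemiMult fun n => F n / G n := by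
  intro m n hm hn
  rw [div_mul_div_comm, div_mul_div_comm, hF m n hm hn, hG m n hm hn]

theorem apply_gcd_ne_zero (hF : IsSemiMult F) {m n : ℕ} (hm : 0 < m) (hn : 0 < n)
    (hFm : F m ≠ 0) (hFn : F n ≠ 0) : F (m.gcd n) ≠ 0 :=
  left_ne_zero_of_mul (hF m n hm hn ▸ mul_ne_zero hFm hFn)

end IsSemiMult

namespace ArithmeticFunction

theorem IsMultiplicative.isSemiMult {f : ArithmeticFunction ℂ} (hf : f.IsMultiplicative) :
    IsSemiMult f := by
  intro m n _ _
  rw [← hf.lcm_apply_mul_gcd_apply, mul_comm]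

def factorialProd : ArithmeticFunction ℕ :=
  ⟨fun n => if n = 0 then 0 else n.factorization.prod fun _ k => k !, by simp⟩

theorem factorialProd_apply {n : ℕ} (hn : n ≠ 0) :
    factorialProd n = n.factorization.prod fun _ k => k ! := if_neg hn

theorem factorialProd_ne_zero {n : ℕ} (hn : n ≠ 0) : factorialProd n ≠ 0 := by
  rw [factorialProd_apply hn]
  exact Finset.prod_ne_zero_iff.mpr fun _ _ => Nat.factorial_ne_zero _

theorem isMultiplicative_factorialProd : factorialProd.IsMultiplicative := by
  refine IsMultiplicative.iff_ne_zero.mpr ⟨by simp [factorialProd], fun {m n} hm hn hmn => ?_⟩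
  rw [factorialProd_apply (mul_ne_zero hm hn), factorialProd_apply hm, factorialProd_apply hn,
    Nat.factorization_mul_of_coprime hmn, Finsupp.prod_add_index_of_disjoint]
  simpa using hmn.disjoint_primeFactors

theorem binomCoeff_mul_factorialProd_mul_factorialProd {n d : ℕ} (hd : d ∣ n) (hn : n ≠ 0) :
    binomCoeff n d * factorialProd d * factorialProd (n / d) = factorialProd n := by
  have hd0 : d ≠ 0 := ne_zero_of_dvd_ne_zero hn hd
  have hnd : n / d ∣ n := Nat.div_dvd_of_dvd hd
  rw [factorialProd_apply hn, factorialProd_apply hd0,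
    factorialProd_apply (ne_zero_of_dvd_ne_zero hn hnd), binomCoeff,
    Finsupp.prod_of_support_subset _ (Nat.primeFactors_mono hd hn) _ fun _ _ => rfl,
    Finsupp.prod_of_support_subset _ (Nat.primeFactors_mono hnd hn) _ fun _ _ => rfl,
    ← prod_mul_distrib, ← prod_mul_distrib]
  refine prod_congr rfl fun p _ => ?_
  rw [Nat.factorization_div hd, Finsupp.tsub_apply]
  exact Nat.choose_mul_factorial_mul_factorial ((Nat.factorization_le_iff_dvd hd0 hn).mpr hd p)

noncomputable def divFactorialProd (F : ℕ → ℂ) : ArithmeticFunction ℂ :=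
  ⟨fun n => F n / factorialProd n, by simp⟩

theorem bconv_eq_factorialProd_mul (F G : ℕ → ℂ) (n : ℕ) :
    bconv F G n = factorialProd n * (divFactorialProd F * divFactorialProd G) n := by
  rcases eq_or_ne n 0 with rfl | hn
  · simp [bconv]
  rw [bconv, mul_apply, Nat.sum_divisorsAntidiagonal fun x y =>
    divFactorialProd F x * divFactorialProd G y, mul_sum]
  refine sum_congr rfl fun d hd => ?_
  have hd : d ∣ n := Nat.dvd_of_mem_divisors hd
  have hu : (factorialProd n : ℂ) = binomCoeff n d * factorialProd d * factorialProd (n / d) := by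
    exact_mod_cast (binomCoeff_mul_factorialProd_mul_factorialProd hd hn).symm
  have hud : (factorialProd d : ℂ) ≠ 0 :=
    Nat.cast_ne_zero.mpr (factorialProd_ne_zero (ne_zero_of_dvd_ne_zero hn hd))
  have hund : (factorialProd (n / d) : ℂ) ≠ 0 := Nat.cast_ne_zero.mpr
    (factorialProd_ne_zero (ne_zero_of_dvd_ne_zero hn (Nat.div_dvd_of_dvd hd)))
  rw [hu]
  simp only [divFactorialProd, coe_mk]
  field_simp

theorem isSemiMult_factorialProd : IsSemiMult fun n => (factorialProd n : ℂ) :=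
  isMultiplicative_factorialProd.natCast.isSemiMult

theorem _root_.IsSemiMult.divFactorialProd {F : ℕ → ℂ} (hF : IsSemiMult F) :
    IsSemiMult (divFactorialProd F) :=
  hF.div isSemiMult_factorialProd

section Single

variable {R : Type*}

/-- `c δ_a`, with the convention `single 0 c = 0`. -/
def single [Zero R] (a : ℕ) (c : R) : ArithmeticFunction R :=
  ⟨fun n => if n = a ∧ n ≠ 0 then c else 0, by simp⟩

theorem single_apply [Zero R] (a : ℕ) (c : R) (n : ℕ) :
    single a c n = if n = a ∧ n ≠ 0 then c else 0 := rfl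

variable [Semiring R]

theorem single_mul_apply (a : ℕ) (c : R) (g : ArithmeticFunction R) (n : ℕ) :
    (single a c * g) n = if a ∣ n then c * g (n / a) else 0 := by
  rw [mul_apply]
  split_ifs with ha
  · obtain ⟨k, rfl⟩ := ha
    rcases eq_or_ne (a * k) 0 with hak | hak
    · rcases mul_eq_zero.mp hak with rfl | rfl <;> simp
    have ha0 : a ≠ 0 := left_ne_zero_of_mul hak
    rw [sum_eq_single (a, k)]
    · simp [single_apply, ha0, Nat.mul_div_cancel_left k (Nat.pos_of_ne_zero ha0)]
    · rintro ⟨x, y⟩ hxy hne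
      obtain ⟨hxy, -⟩ := Nat.mem_divisorsAntidiagonal.mp hxy
      simp only [single_apply]
      rw [if_neg, zero_mul]
      rintro ⟨rfl, -⟩
      exact hne (Prod.ext rfl (Nat.eq_of_mul_eq_mul_left (Nat.pos_of_ne_zero ha0) hxy))
    · simp [hak]
  · refine sum_eq_zero fun x hx => ?_
    rw [single_apply, if_neg, zero_mul]
    rintro ⟨rfl, -⟩
    exact ha (Nat.fst_mem_divisors_of_mem_antidiagonal hx |> Nat.dvd_of_mem_divisors)

theorem single_mul_single (a b : ℕ) (c e : R) :
    single a c * single b e = single (a * b) (c * e) := by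
  ext n
  rw [single_mul_apply, single_apply, single_apply]
  by_cases ha : a ∣ n
  · obtain ⟨k, rfl⟩ := ha
    rcases eq_or_ne a 0 with rfl | ha0
    · simp
    simp [Nat.mul_div_cancel_left k (Nat.pos_of_ne_zero ha0), ha0]
  · have hn : ¬ (n = a * b ∧ n ≠ 0) := fun h => ha ⟨b, h.1⟩
    rw [if_neg ha, if_neg hn]

theorem single_zero (a : ℕ) : single a (0 : R) = 0 := by
  ext n
  simp [single_apply]

end Single

theorem isSemiMult_single_mul (a : ℕ) (c : ℂ) {g : ArithmeticFunction ℂ}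
    (hg : g.IsMultiplicative) :
    IsSemiMult ⇑(single a c * g) := by
  intro m n hm hn
  simp only [single_mul_apply]
  by_cases ham : a ∣ m
  · by_cases han : a ∣ n
    · obtain ⟨m, rfl⟩ := ham
      obtain ⟨n, rfl⟩ := han
      have ha : 0 < a := Nat.pos_of_mul_pos_right hm
      simp only [Nat.gcd_mul_left, Nat.lcm_mul_left, dvd_mul_right, if_true,
        Nat.mul_div_cancel_left _ ha]
      linear_combination (-(c * c)) * hg.lcm_apply_mul_gcd_apply (x := m) (y := n)
    · have hag : ¬ a ∣ m.gcd n := fun h => han (h.trans (Nat.gcd_dvd_right m n))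
      rw [if_neg han, if_neg hag, mul_zero, zero_mul]
  · have hag : ¬ a ∣ m.gcd n := fun h => ham (h.trans (Nat.gcd_dvd_left m n))
    rw [if_neg ham, if_neg hag, zero_mul, zero_mul]

noncomputable def rescale (f : ArithmeticFunction ℂ) (a : ℕ) : ArithmeticFunction ℂ :=
  ⟨fun k => f (a * k) / f a, by simp⟩

theorem _root_.IsSemiMult.isMultiplicative_rescale {f : ArithmeticFunction ℂ} (hf : IsSemiMult f)
    {a : ℕ} (ha : 0 < a) (hfa : f a ≠ 0) : (rescale f a).IsMultiplicative := by
  refine IsMultiplicative.iff_ne_zero.mpr ⟨by simp [rescale, hfa], fun {m n} hm hn hmn => ?_⟩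
  have h := hf (a * m) (a * n) (by positivity) (by positivity)
  rw [Nat.gcd_mul_left, Nat.lcm_mul_left, hmn.gcd_eq_one, hmn.lcm_eq_mul, mul_one] at h
  simp only [rescale, coe_mk]
  field_simp
  linear_combination -h

theorem _root_.IsSemiMult.exists_eq_single_mul {f : ArithmeticFunction ℂ} (hf : IsSemiMult f) :
    ∃ a c, ∃ g : ArithmeticFunction ℂ, g.IsMultiplicative ∧ f = single a c * g := by
  rcases eq_or_ne f 0 with rfl | hf0
  · exact ⟨1, 0, 1, isMultiplicative_one, by rw [single_zero, zero_mul]⟩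
  have hex : ∃ n, f n ≠ 0 := DFunLike.ne_iff.mp hf0
  set a := Nat.find hex
  have hfa : f a ≠ 0 := Nat.find_spec hex
  have pos_of_ne_zero {n : ℕ} (hfn : f n ≠ 0) : 0 < n :=
    Nat.pos_of_ne_zero fun h => hfn (h ▸ f.map_zero)
  have dvd_of_ne_zero {n : ℕ} (hfn : f n ≠ 0) : a ∣ n := by
    have hgcd := hf.apply_gcd_ne_zero (pos_of_ne_zero hfa) (pos_of_ne_zero hfn) hfa hfn
    have hle : a ≤ a.gcd n := Nat.find_min' hex hgcd
    rw [← le_antisymm (Nat.gcd_le_left n (pos_of_ne_zero hfa)) hle]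
    exact Nat.gcd_dvd_right a n
  refine ⟨a, f a, rescale f a, hf.isMultiplicative_rescale (pos_of_ne_zero hfa) hfa, ?_⟩
  ext n
  rw [single_mul_apply]
  split_ifs with han
  · obtain ⟨k, rfl⟩ := han
    simp [rescale, Nat.mul_div_cancel_left k (pos_of_ne_zero hfa), mul_div_cancel₀ _ hfa]
  · exact not_ne_iff.mp (mt dvd_of_ne_zero han)

end ArithmeticFunction

theorem bconv_semimultiplicative_general (F G : ℕ → ℂ)
    (hF : IsSemiMult F) (hG : IsSemiMult G) :
    IsSemiMult (bconv F G) := by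
  obtain ⟨a, c, f, hf, hFf⟩ := hF.divFactorialProd.exists_eq_single_mul
  obtain ⟨b, e, g, hg, hGg⟩ := hG.divFactorialProd.exists_eq_single_mul
  have hconv : divFactorialProd F * divFactorialProd G = single (a * b) (c * e) * (f * g) := by
    rw [hFf, hGg, ← single_mul_single]
    ring
  rw [funext (bconv_eq_factorialProd_mul F G), hconv]
  exact isSemiMult_factorialProd.mul (isSemiMult_single_mul _ _ (hf.mul hg))

/-- If `F` and `G` are semimultiplicative and neither is identically zero, then their
binomial convolution `F ∘ G` is semimultiplicative. -/
theorem bconv_semimultiplicative (F G : ℕ → ℂ)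
    (hF : IsSemiMult F) (hG : IsSemiMult G)
    (hF0 : ∃ n : ℕ, 0 < n ∧ F n ≠ 0) (hG0 : ∃ n : ℕ, 0 < n ∧ G n ≠ 0) :
    IsSemiMult (bconv F G) :=
  bconv_semimultiplicative_general F G hF hG
end

section
/- Let F, G : ℕ → ℂ be semimultiplicative functions, neither identically zero, and let a_F and a_G be the smallest positive integers k with F(k) ≠ 0 and G(k) ≠ 0, respectively. Then a_F·a_G is the smallest positive integer k with (F ∘ G)(k) ≠ 0, and (F ∘ G)(a_F·a_G) = F(a_F)·G(a_G)·ξ(a_F·a_G)/(ξ(a_F)·ξ(a_G)). -/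
/-!
Minimality of `a = a_F` and semimultiplicativity `F a * F n = F (gcd a n) * F (lcm a n)` force every
`n` in the support of `F` to be a multiple of `a`. So in `(F ∘ G)(n)` only divisors `d` with
`a_F ∣ d` and `a_G ∣ n / d` contribute: there are none below `a_F a_G`, and at `a_F a_G` only
`d = a_F` survives, with coefficient
`∏_p C(ν_p(a_F) + ν_p(a_G), ν_p(a_F)) = ξ(a_F a_G) / (ξ(a_F) ξ(a_G))`.
-/

lemma xi_pos (n : ℕ) : 0 < xi n :=
  Finset.prod_pos fun _ _ => Nat.factorial_pos _

lemma xi_eq_prod_of_primeFactors_subset {n : ℕ} {s : Finset ℕ} (h : n.primeFactors ⊆ s) :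
    xi n = ∏ p ∈ s, (n.factorization p).factorial := by
  refine Finset.prod_subset h fun p _ hp => ?_
  rw [Finsupp.notMem_support_iff.mp (Nat.support_factorization n ▸ hp), Nat.factorial_zero]

lemma xi_mul {a b : ℕ} (ha : a ≠ 0) (hb : b ≠ 0) :
    xi (a * b) = binomCoeff (a * b) a * (xi a * xi b) := by
  have hpf := Nat.primeFactors_mul ha hb
  rw [xi, binomCoeff,
    xi_eq_prod_of_primeFactors_subset (hpf ▸ Finset.subset_union_left : a.primeFactors ⊆ _),
    xi_eq_prod_of_primeFactors_subset (hpf ▸ Finset.subset_union_right : b.primeFactors ⊆ _),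
    ← Finset.prod_mul_distrib, ← Finset.prod_mul_distrib]
  refine Finset.prod_congr rfl fun p _ => ?_
  rw [Nat.factorization_mul ha hb, Finsupp.add_apply, ← mul_assoc,
    Nat.choose_symm_add, Nat.add_choose_mul_factorial_mul_factorial]

lemma IsSemiMult.dvd_of_ne_zero {F : ℕ → ℂ} (hF : IsSemiMult F) {a : ℕ} (ha : 0 < a)
    (hFa : F a ≠ 0) (hmin : ∀ k, 0 < k → k < a → F k = 0) (n : ℕ) (hn : 0 < n)
    (hFn : F n ≠ 0) : a ∣ n := by
  have hgcd : F (a.gcd n) ≠ 0 := left_ne_zero_of_mul (hF a n ha hn ▸ mul_ne_zero hFa hFn)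
  have hle : a ≤ a.gcd n :=
    not_lt.mp fun hlt => hgcd (hmin _ (Nat.gcd_pos_of_pos_left n ha) hlt)
  exact Nat.gcd_eq_left_iff_dvd.mp (le_antisymm (Nat.gcd_le_left n ha) hle)

section SupportInMultiples

variable {F G : ℕ → ℂ} {a b : ℕ}
  (hF : ∀ n, 0 < n → F n ≠ 0 → a ∣ n) (hG : ∀ n, 0 < n → G n ≠ 0 → b ∣ n)
include hF hG

lemma dvd_of_bconv_summand_ne_zero {n d : ℕ} (hd : d ∈ n.divisors)
    (h : (binomCoeff n d : ℂ) * F d * G (n / d) ≠ 0) : a ∣ d ∧ b ∣ n / d := by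
  obtain ⟨hdn, hn⟩ := Nat.mem_divisors.mp hd
  have hdpos : 0 < d := Nat.pos_of_dvd_of_pos hdn (Nat.pos_of_ne_zero hn)
  exact ⟨hF d hdpos (right_ne_zero_of_mul (left_ne_zero_of_mul h)),
    hG _ (Nat.div_pos (Nat.le_of_dvd (Nat.pos_of_ne_zero hn) hdn) hdpos) (right_ne_zero_of_mul h)⟩

lemma bconv_eq_zero_of_not_dvd {n : ℕ} (hn : ¬ a * b ∣ n) : bconv F G n = 0 := by
  refine Finset.sum_eq_zero fun d hd => by_contra fun h => hn ?_
  obtain ⟨had, hbd⟩ := dvd_of_bconv_summand_ne_zero hF hG hd h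
  exact Nat.mul_div_cancel' (Nat.dvd_of_mem_divisors hd) ▸ mul_dvd_mul had hbd

lemma bconv_mul_eq (ha : 0 < a) (hb : 0 < b) :
    bconv F G (a * b) = binomCoeff (a * b) a * F a * G b := by
  have hab : a ∈ (a * b).divisors :=
    Nat.mem_divisors.mpr ⟨dvd_mul_right a b, (Nat.mul_pos ha hb).ne'⟩
  rw [bconv, Finset.sum_eq_single_of_mem a hab fun d hd hda => by_contra fun h => hda ?_,
    Nat.mul_div_cancel_left b ha]
  obtain ⟨had, hbd⟩ := dvd_of_bconv_summand_ne_zero hF hG hd h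
  have hdb : d * b ∣ a * b := (Nat.dvd_div_iff_mul_dvd (Nat.dvd_of_mem_divisors hd)).mp hbd
  exact Nat.dvd_antisymm (Nat.dvd_of_mul_dvd_mul_right hb hdb) had

end SupportInMultiples

/-- If `F`, `G` are semimultiplicative (not identically zero) with `a_F`, `a_G` the
smallest positive integers where they do not vanish, then `a_F·a_G` is the smallest
positive integer where `F ∘ G` does not vanish, and
`(F ∘ G)(a_F·a_G) = F(a_F)·G(a_G)·ξ(a_F·a_G)/(ξ(a_F)·ξ(a_G))`. -/
theorem bconv_semimultiplicative_aF_cF (F G : ℕ → ℂ)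
    (hF : IsSemiMult F) (hG : IsSemiMult G) (aF aG : ℕ)
    (haF : 0 < aF) (haF1 : F aF ≠ 0) (haF2 : ∀ k : ℕ, 0 < k → k < aF → F k = 0)
    (haG : 0 < aG) (haG1 : G aG ≠ 0) (haG2 : ∀ k : ℕ, 0 < k → k < aG → G k = 0) :
    (bconv F G (aF * aG) ≠ 0 ∧
      ∀ k : ℕ, 0 < k → k < aF * aG → bconv F G k = 0) ∧
    bconv F G (aF * aG) =
      F aF * G aG * (xi (aF * aG) : ℂ) / ((xi aF : ℂ) * (xi aG : ℂ)) := by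
  have hFa := hF.dvd_of_ne_zero haF haF1 haF2
  have hGa := hG.dvd_of_ne_zero haG haG1 haG2
  have hxi (n : ℕ) : (xi n : ℂ) ≠ 0 := Nat.cast_ne_zero.mpr (xi_pos n).ne'
  have hval : bconv F G (aF * aG) =
      F aF * G aG * (xi (aF * aG) : ℂ) / ((xi aF : ℂ) * (xi aG : ℂ)) := by
    rw [bconv_mul_eq hFa hGa haF haG, xi_mul haF.ne' haG.ne']
    push_cast
    field_simp [hxi]
  refine ⟨⟨?_, fun k hk hlt => ?_⟩, hval⟩
  · rw [hval]
    exact div_ne_zero (mul_ne_zero (mul_ne_zero haF1 haG1) (hxi _))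
      (mul_ne_zero (hxi _) (hxi _))
  · exact bconv_eq_zero_of_not_dvd hFa hGa fun hdvd => (Nat.le_of_dvd hk hdvd).not_gt hlt
end

section
/- Define Λ̃ : ℕ → ℝ by Λ̃(n) = log p if n = p is a prime, and Λ̃(n) = 0 otherwise. Then for every positive integer n, ∑_{d ∣ n} (∏_p C(ν_p(n), ν_p(d))) · Λ̃(d) = log n; that is, the binomial convolution of Λ̃ with the constant function 1 equals the logarithm. -/
/-- The binomial analog of the von Mangoldt function: `Λ̃(n) = log p` if `n = p` is
prime, and `Λ̃(n) = 0` otherwise. -/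
noncomputable def LambdaTilde (n : ℕ) : ℝ := if n.Prime then Real.log n else 0

/-!
Only the prime divisors `p ∣ n` contribute, and for those the binomial weight is
`C(ν_p(n), 1) = ν_p(n)`, all other factors being `C(ν_q(n), 0) = 1`. The sum is therefore
`∑_{p ∣ n} ν_p(n) log p = log n`.
-/

open Finset

theorem binomCoeff_of_mem_primeFactors {n p : ℕ} (hp : p ∈ n.primeFactors) :
    binomCoeff n p = n.factorization p := by
  have hprime := Nat.prime_of_mem_primeFactors hp
  rw [binomCoeff, prod_eq_single_of_mem p hp]
  · simp [hprime.factorization]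
  · intro q _ hqp
    simp [hprime.factorization, Ne.symm hqp]

theorem sum_divisors_mul_LambdaTilde (f : ℕ → ℝ) (n : ℕ) :
    ∑ d ∈ n.divisors, f d * LambdaTilde d = ∑ p ∈ n.primeFactors, f p * Real.log p := by
  rw [Nat.primeFactors_eq_to_filter_divisors_prime, sum_filter]
  exact sum_congr rfl fun d _ => by by_cases hd : d.Prime <;> simp [LambdaTilde, hd]

theorem bconv_LambdaTilde_one_eq_log_general (n : ℕ) :
    ∑ d ∈ n.divisors, (binomCoeff n d : ℝ) * LambdaTilde d * (1 : ℝ) = Real.log n := by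
  simp only [mul_one]
  rw [sum_divisors_mul_LambdaTilde, Real.log_nat_eq_sum_factorization, Finsupp.sum,
    Nat.support_factorization]
  exact sum_congr rfl fun p hp => by rw [binomCoeff_of_mem_primeFactors hp]

/-- The binomial convolution of `Λ̃` with the constant function `1` is `log`:
`∑_{d ∣ n} (∏_p C(ν_p(n), ν_p(d))) Λ̃(d) = log n` for every `n ≥ 1`. -/
theorem bconv_LambdaTilde_one_eq_log (n : ℕ) (hn : 0 < n) :
    ∑ d ∈ n.divisors, (binomCoeff n d : ℝ) * LambdaTilde d * (1 : ℝ) = Real.log n :=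
  bconv_LambdaTilde_one_eq_log_general n
end
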